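/- For any tree T, γ_rdR(T) = γ_r(T) + 1 if and only if T is a star. -/

import Mathlib

open Finset

/-- A restrained double Roman dominating function. -/
def IsRDRD {V : Type*} (G : SimpleGraph V) (f : V → ℕ) : Prop :=
  (∀ v, f v ≤ 3) ∧
  (∀ v, f v = 0 →
    (∃ u, G.Adj v u ∧ f u = 3) ∨
    (∃ u w, G.Adj v u ∧ G.Adj v w ∧ u ≠ w ∧ f u = 2 ∧ f w = 2)) ∧
  (∀ v, f v = 1 → ∃ u, G.Adj v u ∧ 2 ≤ f u) ∧
  (∀ v, f v = 0 → ∃ u, G.Adj v u ∧ f u = 0)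

/-- The restrained double Roman domination number. -/
noncomputable def rdrNum {V : Type*} [Fintype V] (G : SimpleGraph V) : ℕ :=
  sInf {k | ∃ f : V → ℕ, IsRDRD G f ∧ ∑ v, f v = k}

def IsDomSet {V : Type*} (G : SimpleGraph V) (S : Set V) : Prop :=
  ∀ v ∉ S, ∃ u ∈ S, G.Adj v u

def IsRDomSet {V : Type*} (G : SimpleGraph V) (S : Set V) : Prop :=
  IsDomSet G S ∧ ∀ v ∉ S, ∃ u ∉ S, G.Adj v u

def IsR2DomSet {V : Type*} (G : SimpleGraph V) (S : Set V) : Prop :=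
  (∀ v ∉ S, ∃ u w, u ∈ S ∧ w ∈ S ∧ u ≠ w ∧ G.Adj v u ∧ G.Adj v w) ∧
  ∀ v ∉ S, ∃ u ∉ S, G.Adj v u

noncomputable def domNum {V : Type*} [Fintype V] (G : SimpleGraph V) : ℕ :=
  sInf {k | ∃ S : Finset V, IsDomSet G ↑S ∧ S.card = k}

noncomputable def rDomNum {V : Type*} [Fintype V] (G : SimpleGraph V) : ℕ :=
  sInf {k | ∃ S : Finset V, IsRDomSet G ↑S ∧ S.card = k}

noncomputable def r2DomNum {V : Type*} [Fintype V] (G : SimpleGraph V) : ℕ :=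
  sInf {k | ∃ S : Finset V, IsR2DomSet G ↑S ∧ S.card = k}

/-- A restrained Roman dominating function. -/
def IsRRD {V : Type*} (G : SimpleGraph V) (f : V → ℕ) : Prop :=
  (∀ v, f v ≤ 2) ∧
  (∀ v, f v = 0 → ∃ u, G.Adj v u ∧ f u = 2) ∧
  (∀ v, f v = 0 → ∃ u, G.Adj v u ∧ f u = 0)

noncomputable def rrNum {V : Type*} [Fintype V] (G : SimpleGraph V) : ℕ :=
  sInf {k | ∃ f : V → ℕ, IsRRD G f ∧ ∑ v, f v = k}

/-- A star: all edges are incident to one common vertex. -/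
def IsStar {V : Type*} (G : SimpleGraph V) : Prop :=
  ∃ x : V, ∀ ⦃a b : V⦄, G.Adj a b → a = x ∨ b = x

/-- The join of two graphs. -/
def joinG {α β : Type*} (G : SimpleGraph α) (H : SimpleGraph β) : SimpleGraph (α ⊕ β) :=
  SimpleGraph.fromRel (fun x y => match x, y with
    | Sum.inl a, Sum.inl b => G.Adj a b
    | Sum.inr a, Sum.inr b => H.Adj a b
    | Sum.inl _, Sum.inr _ => True
    | Sum.inr _, Sum.inl _ => True)

/-- The disjoint union of two graphs. -/
def dUnion {α β : Type*} (G : SimpleGraph α) (H : SimpleGraph β) : SimpleGraph (α ⊕ β) :=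
  SimpleGraph.fromRel (fun x y => match x, y with
    | Sum.inl a, Sum.inl b => G.Adj a b
    | Sum.inr a, Sum.inr b => H.Adj a b
    | _, _ => False)

/-!
Writing `∑ v, f v = #{v | f v ≠ 0} + ∑ v, (f v - 1)` and observing that the support of a restrained
double Roman dominating function is a restrained dominating set, every such function has weight at
least `γ_r + ∑ v, (f v - 1) ≥ γ_r + 1`, since some vertex has value at least `2`. Equality forces a
minimum function to have excess exactly one: a single vertex `y` of value `2`, and value `1`
everywhere else, so every other vertex is adjacent to `y`; in a tree this is a star centred at `y`.
Conversely, in a star every restrained dominating set is the whole vertex set, so `γ_r = n`, while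
`2` on the center and `1` on the leaves has weight `n + 1`.
-/

section

variable {V : Type*} {G : SimpleGraph V} {f : V → ℕ}

def IsStarCenter (G : SimpleGraph V) (x : V) : Prop :=
  ∀ ⦃a b : V⦄, G.Adj a b → a = x ∨ b = x

lemma IsRDRD.exists_two_le [Nonempty V] (hf : IsRDRD G f) : ∃ y, 2 ≤ f y := by
  obtain ⟨v⟩ := ‹Nonempty V›
  obtain hv | hv | hv : f v = 0 ∨ f v = 1 ∨ 2 ≤ f v := by omega
  · rcases hf.2.1 v hv with ⟨u, -, hu⟩ | ⟨u, -, -, -, -, hu, -⟩ <;> exact ⟨u, by omega⟩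
  · obtain ⟨u, -, hu⟩ := hf.2.2.1 v hv
    exact ⟨u, hu⟩
  · exact ⟨v, hv⟩

lemma IsRDRD.isRDomSet_support [Fintype V] (hf : IsRDRD G f) :
    IsRDomSet G ↑({v | f v ≠ 0} : Finset V) := by
  simp only [IsRDomSet, IsDomSet, coe_filter, mem_univ, true_and, Set.mem_ofPred_eq, not_not]
  refine ⟨fun v hv => ?_, fun v hv => ?_⟩
  · rcases hf.2.1 v hv with ⟨u, hvu, hu⟩ | ⟨u, -, hvu, -, -, hu, -⟩ <;> exact ⟨u, by omega, hvu⟩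
  · obtain ⟨u, hvu, hu⟩ := hf.2.2.2 v hv
    exact ⟨u, hu, hvu⟩

lemma sum_eq_card_support_add_sum_pred [Fintype V] (f : V → ℕ) :
    ∑ v, f v = #{v | f v ≠ 0} + ∑ v, (f v - 1) := by
  rw [card_filter, ← sum_add_distrib]
  exact sum_congr rfl fun v _ => by split_ifs <;> omega

lemma isRDRD_const_two (G : SimpleGraph V) : IsRDRD G fun _ => 2 := by
  refine ⟨fun _ => ?_, fun _ h => ?_, fun _ h => ?_, fun _ h => ?_⟩ <;> simp_all

variable [Fintype V]

lemma rDomNum_le_card {S : Finset V} (hS : IsRDomSet G S) : rDomNum G ≤ #S :=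
  Nat.sInf_le ⟨S, hS, rfl⟩

lemma rdrNum_le_sum (hf : IsRDRD G f) : rdrNum G ≤ ∑ v, f v :=
  Nat.sInf_le ⟨f, hf, rfl⟩

lemma exists_isRDRD_sum_eq_rdrNum (G : SimpleGraph V) :
    ∃ f, IsRDRD G f ∧ ∑ v, f v = rdrNum G := by
  have hne : {k | ∃ f : V → ℕ, IsRDRD G f ∧ ∑ v, f v = k}.Nonempty :=
    ⟨_, _, isRDRD_const_two G, rfl⟩
  exact Nat.sInf_mem hne

lemma exists_isRDomSet_card_eq_rDomNum (G : SimpleGraph V) :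
    ∃ S : Finset V, IsRDomSet G S ∧ #S = rDomNum G := by
  have hne : {k | ∃ S : Finset V, IsRDomSet G S ∧ #S = k}.Nonempty :=
    ⟨_, univ, by simp [IsRDomSet, IsDomSet], rfl⟩
  exact Nat.sInf_mem hne

lemma IsRDRD.rDomNum_add_sum_pred_le (hf : IsRDRD G f) :
    rDomNum G + ∑ v, (f v - 1) ≤ ∑ v, f v := by
  rw [sum_eq_card_support_add_sum_pred f]
  exact Nat.add_le_add_right (rDomNum_le_card hf.isRDomSet_support) _

lemma rDomNum_add_one_le_rdrNum [Nonempty V] (G : SimpleGraph V) :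
    rDomNum G + 1 ≤ rdrNum G := by
  obtain ⟨f, hf, hsum⟩ := exists_isRDRD_sum_eq_rdrNum G
  obtain ⟨y, hy⟩ := hf.exists_two_le
  have : 1 ≤ ∑ v, (f v - 1) := le_trans (by omega) (single_le_sum (by simp) (mem_univ y))
  have := hf.rDomNum_add_sum_pred_le
  omega

/-- Excess at most one leaves room for only one vertex of value at least `2`, so no vertex can take
the value `0` and every other vertex is a `1`-vertex whose big neighbour is `y`. -/
lemma IsRDRD.adj_of_sum_pred_le_one (hf : IsRDRD G f) (hsum : ∑ v, (f v - 1) ≤ 1) {y : V}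
    (hy : 2 ≤ f y) {v : V} (hvy : v ≠ y) : G.Adj v y := by
  have hunique : ∀ u, 2 ≤ f u → u = y := by
    intro u hu
    by_contra huy
    have := add_le_sum (f := fun v => f v - 1) (fun _ _ => Nat.zero_le _) (mem_univ u)
      (mem_univ y) huy
    omega
  have hy2 : f y ≤ 2 := by
    have := single_le_sum (f := fun v => f v - 1) (fun _ _ => Nat.zero_le _) (mem_univ y)
    omega
  have hv1 : f v = 1 := by
    have hv2 : f v < 2 := by by_contra h; exact hvy (hunique v (by omega))
    suffices f v ≠ 0 by omega
    intro hv0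
    rcases hf.2.1 v hv0 with ⟨u, -, hu⟩ | ⟨u, w, -, -, huw, hu, hw⟩
    · rw [hunique u (by omega)] at hu; omega
    · exact huw ((hunique u (by omega)).trans (hunique w (by omega)).symm)
  obtain ⟨u, hvu, hu⟩ := hf.2.2.1 v hv1
  rwa [hunique u hu] at hvu

end

section

variable {V : Type*} {G : SimpleGraph V} {x : V}

lemma IsStarCenter.of_forall_adj (hG : G.IsAcyclic) (h : ∀ v, v ≠ x → G.Adj v x) :
    IsStarCenter G x := by
  intro a b hab
  by_contra! hne
  classical
  exact hG.cliqueFree le_rfl {a, b, x}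
    (SimpleGraph.is3Clique_triple_iff.mpr ⟨hab, h a hne.1, h b hne.2⟩)

lemma IsStarCenter.adj (hx : IsStarCenter G x) (hG : G.Connected) {v : V} (hvx : v ≠ x) :
    G.Adj v x := by
  obtain ⟨p⟩ := hG.preconnected v x
  cases p with
  | nil => exact absurd rfl hvx
  | cons h q => exact (hx h).resolve_left hvx ▸ h

/-- A vertex outside `S` needs neighbours both inside and outside `S`; a leaf has only one
neighbour, and if the center is outside `S` its neighbour outside `S` is an undominated leaf. -/
lemma IsStarCenter.eq_univ_of_isRDomSet (hx : IsStarCenter G x) {S : Set V}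
    (hS : IsRDomSet G S) : S = Set.univ := by
  refine Set.eq_univ_of_forall fun v => by_contra fun hv => ?_
  obtain ⟨u, huS, hvu⟩ := hS.1 v hv
  obtain ⟨w, hwS, hvw⟩ := hS.2 v hv
  by_cases hvx : v = x
  · subst hvx
    obtain ⟨u', hu'S, hwu'⟩ := hS.1 w hwS
    rcases hx hwu' with h | h
    · exact hvw.ne h.symm
    · exact hv (h ▸ hu'S)
  · rw [(hx hvw).resolve_left hvx, ← (hx hvu).resolve_left hvx] at hwS
    exact hwS huS

variable [Fintype V]

lemma IsStarCenter.rDomNum_eq (hx : IsStarCenter G x) : rDomNum G = Fintype.card V := by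
  obtain ⟨S, hS, hcard⟩ := exists_isRDomSet_card_eq_rDomNum G
  rw [← hcard, ← card_univ, ← coe_eq_univ.mp (hx.eq_univ_of_isRDomSet hS)]

lemma IsStarCenter.rdrNum_le (hx : IsStarCenter G x) (hG : G.Connected) :
    rdrNum G ≤ Fintype.card V + 1 := by
  classical
  have hf : IsRDRD G fun v => 1 + if v = x then 1 else 0 := by
    refine ⟨fun v => by dsimp only; split_ifs <;> omega, fun v hv => by dsimp only at hv; omega,
      fun v hv => ?_, fun v hv => by dsimp only at hv; omega⟩
    have hvx : v ≠ x := by rintro rfl; simp at hv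
    exact ⟨x, hx.adj hG hvx, by simp⟩
  calc rdrNum G ≤ ∑ v, (1 + if v = x then 1 else 0) := rdrNum_le_sum hf
    _ = Fintype.card V + 1 := by simp [sum_add_distrib]

end

theorem stmt_15 {V : Type*} [Fintype V] (G : SimpleGraph V) (hT : G.IsTree) :
    rdrNum G = rDomNum G + 1 ↔ IsStar G := by
  have : Nonempty V := hT.connected.nonempty
  constructor
  · intro heq
    obtain ⟨f, hf, hsum⟩ := exists_isRDRD_sum_eq_rdrNum G
    obtain ⟨y, hy⟩ := hf.exists_two_le
    have hexcess : ∑ v, (f v - 1) ≤ 1 := by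
      have := hf.rDomNum_add_sum_pred_le
      omega
    exact ⟨y, IsStarCenter.of_forall_adj hT.isAcyclic fun v hvy =>
      hf.adj_of_sum_pred_le_one hexcess hy hvy⟩
  · rintro ⟨x, hx : IsStarCenter G x⟩
    have := hx.rdrNum_le hT.connected
    have := rDomNum_add_one_le_rdrNum G
    rw [IsStarCenter.rDomNum_eq hx] at *
    omega
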